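/- arXiv:0912.1915 — 6 statements merged into one kernel-verified Lean document; each statement's English description precedes it below -/
import Mathlib

section
/- Let v = (v_1, ..., v_r) be a non-negative, non-increasing integer vector. Then v is GMS if and only if v does not contain a subsequence of consecutive entries of the form (a,a,a), nor a subsequence of consecutive entries (a_i, ..., a_{i+j+1}) with j > 1 such that a_i = a_{i+1}, a_{i+j} = a_{i+j+1}, and a_{i+1}, ..., a_{i+j} are consecutive integers (each entry one less than the previous). -/
/-! Put `f k = v k + k`. As `v` is non-increasing, `f` gains at most one per step, and `v` is GMS
iff `f j ≤ f i + 1` whenever `i < j`. A shortest window `[a, a + d]` over which `f` gains two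
must gain one at its first and at its last step and be flat in between. In terms of `v`, such a
window is the triple `(a, a, a)` when `d = 2` and the second forbidden pattern when `d > 2`. -/

/-- `v` (of length `r`, 0-indexed) is GMS: `v i - v j ≥ j - i - 1` for all `i < j < r`. -/
def IsGMS (r : ℕ) (v : ℕ → ℤ) : Prop :=
  ∀ i j : ℕ, i < j → j < r → v i - v j ≥ (j : ℤ) - (i : ℤ) - 1

/-- `v` contains three consecutive equal entries `(a,a,a)`. -/
def HasTripleRepeat (r : ℕ) (v : ℕ → ℤ) : Prop :=
  ∃ i : ℕ, i + 2 < r ∧ v i = v (i + 1) ∧ v (i + 1) = v (i + 2)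

/-- `v` contains a consecutive subsequence `(a_i, …, a_{i+j+1})` with `j > 1`,
`a_i = a_{i+1}`, `a_{i+j} = a_{i+j+1}`, and `a_{i+1}, …, a_{i+j}` consecutive
integers (each one less than the previous). -/
def HasBadPattern (r : ℕ) (v : ℕ → ℤ) : Prop :=
  ∃ i j : ℕ, 1 < j ∧ i + j + 1 < r ∧ v i = v (i + 1) ∧ v (i + j) = v (i + j + 1) ∧
    ∀ k : ℕ, 1 ≤ k → k < j → v (i + k + 1) = v (i + k) - 1

def HasTwoStepRise (r : ℕ) (f : ℕ → ℤ) : Prop :=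
  ∃ a d, 2 ≤ d ∧ a + d < r ∧ f (a + d) = f a + 2 ∧ ∀ k, 0 < k → k < d → f (a + k) = f a + 1

theorem isGMS_iff_forall_le_add_one {r : ℕ} {v : ℕ → ℤ} :
    IsGMS r v ↔ ∀ i d, i + d < r → v (i + d) + ↑(i + d) ≤ v i + i + 1 := by
  constructor
  · intro h i d hr
    rcases Nat.eq_zero_or_pos d with rfl | hd
    · simp
    · have := h i (i + d) (by omega) hr
      push_cast at this ⊢
      omega
  · intro h i j hij hjr
    have := h i (j - i) (by omega)
    rw [Nat.add_sub_cancel' hij.le] at this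
    omega

theorem hasTwoStepRise_of_add_two_le {r : ℕ} {f : ℕ → ℤ}
    (hstep : ∀ k, k + 1 < r → f (k + 1) ≤ f k + 1) {i d : ℕ} (hr : i + d < r)
    (hrise : f i + 2 ≤ f (i + d)) : HasTwoStepRise r f := by
  classical
  have hex : ∃ d a, a + d < r ∧ f a + 2 ≤ f (a + d) := ⟨d, i, hr, hrise⟩
  obtain ⟨d, ⟨a, hr, hrise⟩, hmin⟩ : ∃ d, (∃ a, a + d < r ∧ f a + 2 ≤ f (a + d)) ∧
      ∀ d' < d, ∀ b, b + d' < r → f (b + d') ≤ f b + 1 :=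
    ⟨Nat.find hex, Nat.find_spec hex,
      fun d' hd' b hb => not_lt.1 fun h => Nat.find_min hex hd' ⟨b, hb, by omega⟩⟩
  have hd : 2 ≤ d := by
    rcases d with _ | _ | d
    · simp at hrise
    · have := hstep a hr
      rw [zero_add] at hrise
      omega
    · omega
  have hplateau : ∀ k, 0 < k → k < d → f (a + k) = f a + 1 := by
    intro k hk hkd
    have hleft := hmin k hkd a (by omega)
    have hright := hmin (d - k) (by omega) (a + k) (by omega)
    rw [add_assoc, Nat.add_sub_cancel' hkd.le] at hright
    omega
  have hlast := hstep (a + (d - 1)) (by omega)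
  rw [add_assoc, Nat.sub_add_cancel (by omega : 1 ≤ d), hplateau (d - 1) (by omega) (by omega)]
    at hlast
  exact ⟨a, d, hd, hr, by omega, hplateau⟩

theorem HasTripleRepeat.hasTwoStepRise {r : ℕ} {v : ℕ → ℤ} (h : HasTripleRepeat r v) :
    HasTwoStepRise r (fun k => v k + k) := by
  obtain ⟨i, hr, h₁, h₂⟩ := h
  refine ⟨i, 2, le_rfl, hr, by push_cast; omega, fun k hk hk2 => ?_⟩
  obtain rfl : k = 1 := by omega
  push_cast
  omega

theorem HasBadPattern.hasTwoStepRise {r : ℕ} {v : ℕ → ℤ} (h : HasBadPattern r v) :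
    HasTwoStepRise r (fun k => v k + k) := by
  obtain ⟨i, j, hj, hr, hfirst, hlast, hdesc⟩ := h
  have hplateau : ∀ k, 0 < k → k ≤ j → v (i + k) + k = v i + 1 := by
    intro k hk hkj
    induction k with
    | zero => omega
    | succ k ih =>
      rcases Nat.eq_zero_or_pos k with rfl | hk
      · simp [hfirst]
      · rw [← add_assoc, hdesc k hk (by omega)]
        have := ih hk (by omega)
        push_cast
        omega
  refine ⟨i, j + 1, by omega, hr, ?_, fun k hk hkj => ?_⟩
  · have := hplateau j (by omega) le_rfl
    rw [← add_assoc i j 1]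
    push_cast
    omega
  · have := hplateau k hk (by omega)
    push_cast
    omega

theorem HasTwoStepRise.hasTripleRepeat_or_hasBadPattern {r : ℕ} {v : ℕ → ℤ}
    (h : HasTwoStepRise r (fun k => v k + k)) : HasTripleRepeat r v ∨ HasBadPattern r v := by
  obtain ⟨a, d, hd, hr, hrise, hplateau⟩ := h
  simp only [Nat.cast_add] at hrise hplateau
  rcases hd.eq_or_lt with rfl | hd
  · have := hplateau 1 one_pos one_lt_two
    left
    refine ⟨a, hr, ?_, ?_⟩ <;> push_cast at * <;> omega
  · right
    refine ⟨a, d - 1, by omega, by omega, ?_, ?_, fun k hk hkd => ?_⟩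
    · have := hplateau 1 one_pos (by omega)
      push_cast at this
      omega
    · have := hplateau (d - 1) (by omega) (by omega)
      rw [add_assoc, Nat.sub_add_cancel (by omega : 1 ≤ d)]
      omega
    · have h₁ := hplateau k hk (by omega)
      have h₂ := hplateau (k + 1) (by omega) (by omega)
      rw [← add_assoc a k 1] at h₂
      push_cast at h₂
      omega

theorem hasTripleRepeat_or_hasBadPattern_iff {r : ℕ} {v : ℕ → ℤ} :
    HasTripleRepeat r v ∨ HasBadPattern r v ↔ HasTwoStepRise r (fun k => v k + k) :=
  ⟨fun h => h.elim HasTripleRepeat.hasTwoStepRise HasBadPattern.hasTwoStepRise,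
    HasTwoStepRise.hasTripleRepeat_or_hasBadPattern⟩

theorem gms_iff_no_bad_patterns_general (r : ℕ) (v : ℕ → ℤ)
    (hnoninc : ∀ i, i + 1 < r → v (i + 1) ≤ v i) :
    IsGMS r v ↔ ¬ HasTripleRepeat r v ∧ ¬ HasBadPattern r v := by
  rw [← not_or, hasTripleRepeat_or_hasBadPattern_iff, isGMS_iff_forall_le_add_one]
  have hstep : ∀ k, k + 1 < r → v (k + 1) + ↑(k + 1) ≤ v k + k + 1 := fun k hk => by
    have := hnoninc k hk
    push_cast
    omega
  constructor
  · rintro h ⟨a, d, -, hr, hrise, -⟩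
    have := h a d hr
    simp only [Nat.cast_add] at this hrise
    omega
  · intro h i d hr
    by_contra! hgap
    exact h (hasTwoStepRise_of_add_two_le hstep hr (by omega))

theorem gms_iff_no_bad_patterns (r : ℕ) (v : ℕ → ℤ)
    (hnonneg : ∀ i, i < r → 0 ≤ v i)
    (hnoninc : ∀ i, i + 1 < r → v (i + 1) ≤ v i) :
    IsGMS r v ↔ ¬ HasTripleRepeat r v ∧ ¬ HasBadPattern r v :=
  gms_iff_no_bad_patterns_general r v hnoninc
end

section
/- Let K be a field, R = K[x_0, ..., x_N] the polynomial ring in N+1 variables, and let V be a nonzero K-vector subspace of the space R_t of homogeneous polynomials of degree t ≥ 0. Then the subspace R_1·V of R_{t+1} spanned by all products of a linear form with an element of V satisfies dim_K(R_1·V) ≥ N + dim_K(V). -/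
/-!
Fix a monomial order. For a finite-dimensional space `W` of polynomials, the set of leading
exponents of its nonzero elements has exactly `dim W` elements: polynomials with distinct leading
exponents are linearly independent, and a nonzero element of `W` has a nonzero coefficient at its
own leading exponent. If `D` is the leading-exponent set of `V`, `d₀` its least element and `x_j`
the largest variable, then `R₁ · V` has the leading exponents `e_j + D` and `e_i + d₀` for every
variable `x_i`; the two families meet only in `e_j + d₀`, so `R₁ · V` has at least
`dim V + (N + 1) - 1` of them.
-/

open MvPolynomial

namespace MonomialOrder

variable {σ K : Type*} [Field K] (m : MonomialOrder σ)

theorem linearIndependent_of_injective_degree {ι : Type*} {f : ι → MvPolynomial σ K}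
    (hf : ∀ i, f i ≠ 0) (hinj : Function.Injective (m.degree ∘ f)) :
    LinearIndependent K f := by
  classical
  rw [linearIndependent_iff']
  intro s g hsum i hi
  by_contra hgi
  obtain ⟨j, hj, hmax⟩ := (s.filter (g · ≠ 0)).exists_max_image (m.toSyn ∘ m.degree ∘ f)
    ⟨i, Finset.mem_filter.mpr ⟨hi, hgi⟩⟩
  rw [Finset.mem_filter] at hj
  have hcoeff : coeff (m.degree (f j)) (∑ k ∈ s, g k • f k) = g j * m.leadingCoeff (f j) := by
    rw [coeff_sum, Finset.sum_eq_single_of_mem j hj.1]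
    · rw [coeff_smul, smul_eq_mul, leadingCoeff]
    intro k hk hkj
    by_cases hgk : g k = 0
    · rw [hgk, zero_smul, coeff_zero]
    rw [coeff_smul, m.coeff_eq_zero_of_lt, smul_zero]
    exact (hmax k (Finset.mem_filter.mpr ⟨hk, hgk⟩)).lt_of_ne
      fun h => hkj (hinj (m.toSyn.injective h))
  rw [hsum, coeff_zero, eq_comm] at hcoeff
  exact mul_ne_zero hj.2 (m.leadingCoeff_ne_zero_iff.mpr (hf j)) hcoeff

def degreeSet (W : Submodule K (MvPolynomial σ K)) : Set (σ →₀ ℕ) :=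
  {d | ∃ p ∈ W, p ≠ 0 ∧ m.degree p = d}

variable {m} in
theorem add_mem_degreeSet_mul {U W : Submodule K (MvPolynomial σ K)} {d e : σ →₀ ℕ}
    (hd : d ∈ m.degreeSet U) (he : e ∈ m.degreeSet W) : d + e ∈ m.degreeSet (U * W) := by
  obtain ⟨p, hpU, hp, rfl⟩ := hd
  obtain ⟨q, hqW, hq, rfl⟩ := he
  exact ⟨p * q, Submodule.mul_mem_mul hpU hqW, mul_ne_zero hp hq, m.degree_mul hp hq⟩

theorem exists_linearIndependent_degreeSet (W : Submodule K (MvPolynomial σ K)) :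
    ∃ f : m.degreeSet W → W, LinearIndependent K f := by
  choose f hfW hf hdeg using fun d : m.degreeSet W => d.2
  refine ⟨fun d => ⟨f d, hfW d⟩, LinearIndependent.of_comp W.subtype ?_⟩
  refine m.linearIndependent_of_injective_degree hf fun d d' h => Subtype.ext ?_
  simpa only [Function.comp_apply, Submodule.subtype_apply, hdeg] using h

theorem finite_degreeSet (W : Submodule K (MvPolynomial σ K)) [FiniteDimensional K W] :
    (m.degreeSet W).Finite :=
  have ⟨_, hf⟩ := m.exists_linearIndependent_degreeSet W
  Set.finite_coe_iff.mp hf.finite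

theorem ncard_degreeSet_le_finrank (W : Submodule K (MvPolynomial σ K)) [FiniteDimensional K W] :
    (m.degreeSet W).ncard ≤ Module.finrank K W := by
  obtain ⟨_, hf⟩ := m.exists_linearIndependent_degreeSet W
  have := (m.finite_degreeSet W).fintype
  rw [← Nat.card_coe_set_eq, Nat.card_eq_fintype_card]
  exact hf.fintype_card_le_finrank

theorem finrank_le_ncard_degreeSet {W : Submodule K (MvPolynomial σ K)}
    (hW : (m.degreeSet W).Finite) : Module.finrank K W ≤ (m.degreeSet W).ncard := by
  have := hW.fintype
  let coeffs : W →ₗ[K] m.degreeSet W → K :=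
    LinearMap.pi fun d => (lcoeff K d.1).comp W.subtype
  have hinj : Function.Injective coeffs := by
    rw [← LinearMap.ker_eq_bot, Submodule.eq_bot_iff]
    intro p hp
    by_contra hp0
    have hp0' : (p : MvPolynomial σ K) ≠ 0 := by simpa using hp0
    have := congrFun (LinearMap.mem_ker.mp hp) ⟨_, p, p.2, hp0', rfl⟩
    exact m.leadingCoeff_ne_zero_iff.mpr hp0' this
  calc Module.finrank K W ≤ Module.finrank K (m.degreeSet W → K) :=
        LinearMap.finrank_le_finrank_of_injective hinj
    _ = (m.degreeSet W).ncard := by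
        rw [Module.finrank_fintype_fun_eq_card, ← Nat.card_eq_fintype_card,
          Nat.card_coe_set_eq]

theorem ncard_degreeSet (W : Submodule K (MvPolynomial σ K)) [FiniteDimensional K W] :
    (m.degreeSet W).ncard = Module.finrank K W :=
  (m.ncard_degreeSet_le_finrank W).antisymm (m.finrank_le_ncard_degreeSet (m.finite_degreeSet W))

theorem card_add_card_le_card_union_add_one [Fintype σ] [DecidableEq σ] {D : Finset (σ →₀ ℕ)}
    {d₀ : σ →₀ ℕ} (hmin : ∀ d ∈ D, m.toSyn d₀ ≤ m.toSyn d) {j : σ}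
    (hj : ∀ i, m.toSyn (Finsupp.single i 1) ≤ m.toSyn (Finsupp.single j 1)) :
    D.card + Fintype.card σ ≤
      (D.image (Finsupp.single j 1 + ·) ∪ Finset.univ.image (Finsupp.single · 1 + d₀)).card + 1 := by
  set A := D.image (Finsupp.single j 1 + ·)
  set B := Finset.univ.image (Finsupp.single · 1 + d₀)
  have hA : A.card = D.card := Finset.card_image_of_injective _ (add_right_injective _)
  have hB : B.card = Fintype.card σ := by
    refine Finset.card_image_of_injective _ fun i i' h => ?_
    exact Finsupp.single_left_injective one_ne_zero (add_right_cancel h)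
  -- `e_j + d = e_i + d₀ ≤ e_j + d₀` forces `d ≤ d₀`, hence `d = d₀` by minimality.
  have hAB : A ∩ B ⊆ {Finsupp.single j 1 + d₀} := by
    intro x hx
    obtain ⟨⟨d, hd, rfl⟩, ⟨i, -, hi⟩⟩ := And.imp Finset.mem_image.mp Finset.mem_image.mp
      (Finset.mem_inter.mp hx)
    have hle : m.toSyn d ≤ m.toSyn d₀ := by
      have := add_le_add_left (hj i) (m.toSyn d₀)
      rw [← map_add, ← map_add, hi, map_add, map_add] at this
      exact le_of_add_le_add_left this
    rw [m.toSyn.injective ((hmin d hd).antisymm' hle), Finset.mem_singleton]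
  have := Finset.card_union_add_card_inter A B
  have := (Finset.card_le_card hAB).trans (Finset.card_singleton _).le
  omega

end MonomialOrder

namespace MvPolynomial

variable {σ K : Type*} [Field K]

instance [Finite σ] (n : ℕ) : Module.Finite K (homogeneousSubmodule σ K n) :=
  Submodule.finiteDimensional_of_le (S₂ := restrictTotalDegree σ K n) fun _ hp =>
    (mem_restrictTotalDegree σ n _).mpr ((mem_homogeneousSubmodule n _).mp hp).totalDegree_le

theorem finrank_add_card_le_finrank_homogeneousSubmodule_one_mul [Fintype σ] [Nonempty σ]
    (V : Submodule K (MvPolynomial σ K)) [FiniteDimensional K V] (hV : V ≠ ⊥) :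
    Module.finrank K V + Fintype.card σ ≤
      Module.finrank K (homogeneousSubmodule σ K 1 * V : Submodule K (MvPolynomial σ K)) + 1 := by
  classical
  let _ : LinearOrder σ := LinearOrder.lift' _ (Fintype.equivFin σ).injective
  let m : MonomialOrder σ := MonomialOrder.lex
  set W : Submodule K (MvPolynomial σ K) := homogeneousSubmodule σ K 1 * V
  have : FiniteDimensional K W := Module.Finite.iff_fg.mpr <|
    (Module.Finite.iff_fg.mp inferInstance).mul (Module.Finite.iff_fg.mp inferInstance)
  set D := (m.finite_degreeSet V).toFinset
  obtain ⟨p, hpV, hp⟩ := Submodule.exists_mem_ne_zero_of_ne_bot hV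
  obtain ⟨d₀, hd₀, hmin⟩ := D.exists_min_image m.toSyn
    ⟨m.degree p, (Set.Finite.mem_toFinset _).mpr ⟨p, hpV, hp, rfl⟩⟩
  obtain ⟨j, hj⟩ := Finite.exists_max fun i => m.toSyn (Finsupp.single i 1)
  have hX (i : σ) : Finsupp.single i 1 ∈ m.degreeSet (homogeneousSubmodule σ K 1) :=
    ⟨X i, isHomogeneous_X K i, X_ne_zero i, m.degree_X⟩
  have hsub : ↑(D.image (Finsupp.single j 1 + ·) ∪ Finset.univ.image (Finsupp.single · 1 + d₀))
      ⊆ m.degreeSet W := by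
    rw [Finset.coe_union, Finset.coe_image, Finset.coe_image, Set.union_subset_iff]
    constructor
    · rintro _ ⟨d, hd, rfl⟩
      exact MonomialOrder.add_mem_degreeSet_mul (hX j) ((Set.Finite.mem_toFinset _).mp hd)
    · rintro _ ⟨i, -, rfl⟩
      exact MonomialOrder.add_mem_degreeSet_mul (hX i) ((Set.Finite.mem_toFinset _).mp hd₀)
  calc Module.finrank K V + Fintype.card σ = D.card + Fintype.card σ := by
        rw [← m.ncard_degreeSet V, Set.ncard_eq_toFinset_card _ (m.finite_degreeSet V)]
    _ ≤ _ := m.card_add_card_le_card_union_add_one hmin hj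
    _ ≤ (m.degreeSet W).ncard + 1 := by
        grw [← Set.ncard_coe_finset, Set.ncard_le_ncard hsub (m.finite_degreeSet W)]
    _ = Module.finrank K W + 1 := by rw [m.ncard_degreeSet]

end MvPolynomial

theorem dim_R1_mul_V_ge (K : Type*) [Field K] (N t : ℕ)
    (V : Submodule K (MvPolynomial (Fin (N + 1)) K))
    (hV : V ≤ homogeneousSubmodule (Fin (N + 1)) K t)
    (hV0 : V ≠ ⊥) :
    N + Module.finrank K V ≤
      Module.finrank K (homogeneousSubmodule (Fin (N + 1)) K 1 * V : Submodule K (MvPolynomial (Fin (N + 1)) K)) := by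
  have : FiniteDimensional K V := Submodule.finiteDimensional_of_le hV
  have := finrank_add_card_le_finrank_homogeneousSubmodule_one_mul V hV0
  rw [Fintype.card_fin] at this
  omega
end

section
/- Let K be a field, R = K[x_0, ..., x_N], and let W_i ⊆ R_1 denote the K-span of x_0, ..., x_i. If V is a nonzero subspace of R_t, then for each 1 ≤ i ≤ N, x_i·V is not contained in W_{i-1}·V; consequently W_0·V ⊊ W_1·V ⊊ ... ⊊ W_N·V = R_1·V is a strictly increasing chain of subspaces. -/
/-!
Let `m` be the lexicographically smallest exponent occurring in an element of `V`, and `v ∈ V`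
a polynomial containing it. Then `x_i v` contains `x_i x^m`, while a monomial `x_j x^d` of
`W_{i-1} V` with `x_j x^d = x_i x^m` and `j < i` would force `d <lex m` (the two first differ
at `j`), contradicting minimality; `m` exists because the lexicographic order on exponents is a
well-order.
-/

open MvPolynomial

/-- `W K N i` is the span of the variables `x_0, …, x_i` in `K[x_0, …, x_N]`. -/
noncomputable def W (K : Type*) [Field K] (N i : ℕ) : Submodule K (MvPolynomial (Fin (N + 1)) K) :=
  Submodule.span K {p | ∃ k : Fin (N + 1), (k : ℕ) ≤ i ∧ p = X k}

open scoped Pointwise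

namespace MvPolynomial

variable {σ R : Type*} [CommSemiring R]

lemma span_X_image_eq_restrictSupport (s : Set σ) :
    Submodule.span R (X '' s) = restrictSupport R ((Finsupp.single · 1) '' s) := by
  rw [restrictSupport_eq_span, Set.image_image]
  rfl

variable [LinearOrder σ]

lemma toLex_lt_of_single_add_eq_single_add {i j : σ} (hji : j < i) {d m : σ →₀ ℕ}
    (h : Finsupp.single j 1 + d = Finsupp.single i 1 + m) : toLex d < toLex m := by
  have h_at (k : σ) := DFunLike.congr_fun h k
  refine Finsupp.Lex.lt_iff.mpr ⟨j, fun k hkj => ?_, ?_⟩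
  · have := h_at k
    rw [Finsupp.add_apply, Finsupp.add_apply, Finsupp.single_eq_of_ne hkj.ne,
      Finsupp.single_eq_of_ne (hkj.trans hji).ne] at this
    show d k = m k
    omega
  · have := h_at j
    rw [Finsupp.add_apply, Finsupp.add_apply, Finsupp.single_eq_same,
      Finsupp.single_eq_of_ne hji.ne] at this
    show d j < m j
    omega

variable [WellFoundedGT σ]

lemma exists_support_lex_min_of_ne_bot {V : Submodule R (MvPolynomial σ R)} (hV : V ≠ ⊥) :
    ∃ m, ∃ v ∈ V, m ∈ v.support ∧ V ≤ restrictSupport R {d | toLex m ≤ toLex d} := by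
  obtain ⟨v, hv, hv0⟩ := Submodule.exists_mem_ne_zero_of_ne_bot hV
  obtain ⟨d, hd⟩ := Finset.nonempty_iff_ne_empty.mpr (mt support_eq_empty.mp hv0)
  obtain ⟨m, ⟨w, hw, hmw⟩, hmin⟩ := wellFounded_lt.has_min
    {d : Lex (σ →₀ ℕ) | ∃ v ∈ V, ofLex d ∈ v.support} ⟨toLex d, v, hv, hd⟩
  exact ⟨ofLex m, w, hw, hmw, fun u hu e he => not_lt.mp (hmin (toLex e) ⟨u, hu, he⟩)⟩

theorem span_X_mul_not_le_span_X_lt_mul {V : Submodule R (MvPolynomial σ R)} (hV : V ≠ ⊥)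
    (i : σ) : ¬ Submodule.span R {X i} * V ≤ Submodule.span R (X '' Set.Iio i) * V := by
  intro hle
  obtain ⟨m, v, hv, hmv, hVm⟩ := exists_support_lex_min_of_ne_bot hV
  have hXv : X i * v ∈ restrictSupport R
      ((Finsupp.single · 1) '' Set.Iio i + {d | toLex m ≤ toLex d}) := by
    rw [restrictSupport_add, ← span_X_image_eq_restrictSupport]
    exact mul_le_mul_right hVm _
      (hle (Submodule.mul_mem_mul (Submodule.mem_span_singleton_self _) hv))
  have hmem : Finsupp.single i 1 + m ∈ (X i * v).support := by
    rwa [mem_support_iff, coeff_X_mul, ← mem_support_iff]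
  obtain ⟨_, ⟨j, hji, rfl⟩, d, hmd, hd⟩ := hXv hmem
  exact (toLex_lt_of_single_add_eq_single_add hji hd).not_ge hmd

end MvPolynomial

lemma W_pred_le_span_X_Iio (K : Type*) [Field K] (N : ℕ) {i : Fin (N + 1)}
    (hi : 1 ≤ (i : ℕ)) :
    W K N ((i : ℕ) - 1) ≤ Submodule.span K (X '' Set.Iio i) :=
  Submodule.span_mono fun _ ⟨k, hk, hp⟩ => ⟨k, Fin.lt_def.mpr (by omega), hp.symm⟩

lemma W_mono (K : Type*) [Field K] (N : ℕ) : Monotone (W K N) :=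
  fun _ _ hij => Submodule.span_mono fun _ ⟨k, hk, hp⟩ => ⟨k, hk.trans hij, hp⟩

lemma span_X_le_W (K : Type*) [Field K] (N : ℕ) (i : Fin (N + 1)) :
    Submodule.span K {X i} ≤ W K N i :=
  Submodule.span_mono (Set.singleton_subset_iff.mpr ⟨i, le_rfl, rfl⟩)

lemma W_self_eq_homogeneousSubmodule_one (K : Type*) [Field K] (N : ℕ) :
    W K N N = homogeneousSubmodule (Fin (N + 1)) K 1 := by
  rw [homogeneousSubmodule_one_eq_span_X, W]
  congr 1
  ext p
  exact ⟨fun ⟨k, _, hp⟩ => ⟨k, hp.symm⟩,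
    fun ⟨k, hp⟩ => ⟨k, Nat.lt_succ_iff.mp k.isLt, hp.symm⟩⟩

theorem xi_mul_V_not_le_and_strict_chain_general (K : Type*) [Field K] (N : ℕ)
    (V : Submodule K (MvPolynomial (Fin (N + 1)) K))
    (hV0 : V ≠ ⊥) :
    (∀ i : Fin (N + 1), 1 ≤ (i : ℕ) →
      ¬ (Submodule.span K {X i} * V ≤ W K N ((i : ℕ) - 1) * V)) ∧
    (∀ i : ℕ, 1 ≤ i → i ≤ N → W K N (i - 1) * V < W K N i * V) ∧
    W K N N * V = homogeneousSubmodule (Fin (N + 1)) K 1 * V := by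
  have hX_not_le (i : Fin (N + 1)) (hi : 1 ≤ (i : ℕ)) :
      ¬ (Submodule.span K {X i} * V ≤ W K N ((i : ℕ) - 1) * V) := fun hle =>
    span_X_mul_not_le_span_X_lt_mul hV0 i
      (hle.trans (mul_le_mul_left (W_pred_le_span_X_Iio K N hi) V))
  refine ⟨hX_not_le, fun i hi hiN => ?_, by rw [W_self_eq_homogeneousSubmodule_one]⟩
  refine lt_of_le_not_ge (mul_le_mul_left (W_mono K N (Nat.sub_le i 1)) V) fun hle => ?_
  let i' : Fin (N + 1) := ⟨i, by omega⟩
  exact hX_not_le i' hi ((mul_le_mul_left (span_X_le_W K N i') V).trans hle)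

theorem xi_mul_V_not_le_and_strict_chain (K : Type*) [Field K] (N t : ℕ)
    (V : Submodule K (MvPolynomial (Fin (N + 1)) K))
    (hV : V ≤ homogeneousSubmodule (Fin (N + 1)) K t)
    (hV0 : V ≠ ⊥) :
    (∀ i : Fin (N + 1), 1 ≤ (i : ℕ) →
      ¬ (Submodule.span K {X i} * V ≤ W K N ((i : ℕ) - 1) * V)) ∧
    (∀ i : ℕ, 1 ≤ i → i ≤ N → W K N (i - 1) * V < W K N i * V) ∧
    W K N N * V = homogeneousSubmodule (Fin (N + 1)) K 1 * V :=
  xi_mul_V_not_le_and_strict_chain_general K N V hV0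
end

section
/- For any non-negative integer vector v = (v_1, ..., v_{n+1}) and any integer t ≥ 0, f_v(t) ≤ F_v(t), where f_v(t) = Σ_{i=0}^{n} binom(min(t-i+1, v_{i+1}), 1) and F_v(t) = min over 0 ≤ i ≤ n+1 of ( binom(t+2, 2) - binom(t-i+2, 2) + Σ_{j=i+1}^{n+1} v_j ). -/
/-!
Pascal's rule `binom2 (x + 1) = binom2 x + binom1 x` holds for every integer `x`, so
`binom2 (t + 2) - binom2 (t - i + 2)` telescopes to `∑ j < i, binom1 (t - j + 1)`. Splitting the
sum defining `f_v(t)` at `i`, the terms with `j < i` are bounded by `binom1 (t - j + 1)` and the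
terms with `j ≥ i` by `v j`; this bounds `f_v(t)` by every entry of the minimum defining `F_v(t)`.
-/

/-- Extended binomial coefficient `binom(x,1) = max x 0`. -/
def binom1 (x : ℤ) : ℤ := max x 0

/-- Extended binomial coefficient `binom(x,2) = x(x-1)/2` for `x ≥ 0`, else `0`. -/
def binom2 (x : ℤ) : ℤ := if 0 ≤ x then x * (x - 1) / 2 else 0

/-- `f_v(t)` for a vector `v = (v_1, …, v_{n+1})` given 0-indexed by `v : ℕ → ℤ`. -/
def fLow (n : ℕ) (v : ℕ → ℤ) (t : ℤ) : ℤ :=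
  ∑ i ∈ Finset.range (n + 1), binom1 (min (t - i + 1) (v i))

/-- `F_v(t)` for a vector `v = (v_1, …, v_{n+1})` given 0-indexed by `v : ℕ → ℤ`. -/
def FUpp (n : ℕ) (v : ℕ → ℤ) (t : ℤ) : ℤ :=
  Finset.inf' (Finset.range (n + 2)) (by simp) fun i =>
    binom2 (t + 2) - binom2 (t - i + 2) + ∑ j ∈ Finset.Ico i (n + 1), v j

open Finset

lemma binom1_mono : Monotone binom1 := fun _ _ h => max_le_max_right 0 h

lemma binom1_min_le_right (a : ℤ) {b : ℤ} (hb : 0 ≤ b) : binom1 (min a b) ≤ b :=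
  max_le (min_le_right a b) hb

lemma binom2_add_one (x : ℤ) : binom2 (x + 1) = binom2 x + binom1 x := by
  rcases lt_or_ge x 0 with hx | hx
  · obtain hx' | hx' : x + 1 < 0 ∨ x + 1 = 0 := by omega
    · simp [binom2, binom1, hx.not_ge, hx'.not_ge, hx.le]
    · simp [binom2, binom1, hx', hx.not_ge, hx.le]
  · have hdiv : (x + 1) * x = x * (x - 1) + 2 * x := by ring
    simp only [binom2, binom1, if_pos hx, if_pos (by omega : 0 ≤ x + 1), add_sub_cancel_right,
      max_eq_left hx, hdiv, Int.add_mul_ediv_left _ _ two_ne_zero]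

lemma binom2_sub_binom2_eq_sum_binom1 (t : ℤ) (i : ℕ) :
    binom2 (t + 2) - binom2 (t - i + 2) = ∑ j ∈ range i, binom1 (t - j + 1) := by
  have hstep (j : ℕ) :
      binom2 (t - j + 2) - binom2 (t - ↑(j + 1) + 2) = binom1 (t - j + 1) := by
    rw [Nat.cast_succ, show t - (j + 1) + 2 = t - j + 1 by ring,
      show t - j + 2 = t - j + 1 + 1 by ring, binom2_add_one, add_sub_cancel_left]
  have htelescope := sum_range_sub' (fun j : ℕ => binom2 (t - j + 2)) i
  simp only [Nat.cast_zero, sub_zero] at htelescope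
  rw [← htelescope]
  exact sum_congr rfl fun j _ => hstep j

theorem fLow_le_FUpp_general (n : ℕ) (v : ℕ → ℤ) (t : ℤ)
    (hnonneg : ∀ i, i ≤ n → 0 ≤ v i) :
    fLow n v t ≤ FUpp n v t := by
  refine le_inf' _ _ fun i hi => ?_
  have hin : i ≤ n + 1 := Nat.lt_succ_iff.mp (mem_range.mp hi)
  rw [binom2_sub_binom2_eq_sum_binom1, fLow, ← sum_range_add_sum_Ico _ hin]
  gcongr with j _ j hj
  · exact binom1_mono (min_le_left _ _)
  · exact binom1_min_le_right _ (hnonneg j (Nat.lt_succ_iff.mp (mem_Ico.mp hj).2))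

theorem fLow_le_FUpp (n : ℕ) (v : ℕ → ℤ) (t : ℤ) (ht : 0 ≤ t)
    (hnonneg : ∀ i, i ≤ n → 0 ≤ v i) :
    fLow n v t ≤ FUpp n v t :=
  fLow_le_FUpp_general n v t hnonneg
end

section
/- If v = (v_1, ..., v_{n+1}) is a non-negative, non-increasing GMS integer vector, then f_v(t) = F_v(t) for every integer t ≥ 0. -/
/-!
Write `a k = binom(t - k + 1, 1)`. Then `f_v(t) = ∑_{k ≤ n} min (a k) (v k)`, while the `i`-th
candidate of `F_v(t)` telescopes to `∑_{k < i} a k + ∑_{i ≤ k ≤ n} v k`. Every candidate is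
therefore at least `f_v(t)`, with equality as soon as `a ≤ v` below `i` and `v ≤ a` from `i` on.
Such a threshold `i` exists because `a` drops by at most one per step while, by the GMS condition,
`v` drops by at least one per step up to one unit of slack: once `a m < v m`, also `a k ≤ v k` for
all `k < m`.
-/

open Finset

lemma binom1_min_of_nonneg {x y : ℤ} (hy : 0 ≤ y) : binom1 (min x y) = min (binom1 x) y := by
  simp only [binom1]
  omega

lemma binom1_le_binom1_add_sub {x y : ℤ} (h : y ≤ x) : binom1 x ≤ binom1 y + (x - y) := by
  simp only [binom1]
  omega

lemma binom2_sub_binom2_eq_sum (t : ℤ) (i : ℕ) :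
    binom2 (t + 2) - binom2 (t - i + 2) = ∑ k ∈ range i, binom1 (t - k + 1) := by
  induction i with
  | zero => simp
  | succ m ih =>
    have hstep : t - (m : ℤ) + 2 = (t - ((m + 1 : ℕ) : ℤ) + 2) + 1 := by push_cast; ring
    rw [sum_range_succ, ← ih, hstep, binom2_add_one]
    push_cast
    ring_nf

section Threshold

variable (a v : ℕ → ℤ)

lemma sum_min_le_sum_add_sum {N i : ℕ} (hi : i ≤ N) :
    ∑ k ∈ range N, min (a k) (v k) ≤ ∑ k ∈ range i, a k + ∑ k ∈ Ico i N, v k := by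
  rw [← sum_range_add_sum_Ico _ hi]
  gcongr with k
  · exact min_le_left _ _
  · exact min_le_right _ _

lemma sum_add_sum_eq_sum_min {N i : ℕ} (hi : i ≤ N) (hlow : ∀ k < i, a k ≤ v k)
    (hhigh : ∀ k, i ≤ k → k < N → v k ≤ a k) :
    ∑ k ∈ range i, a k + ∑ k ∈ Ico i N, v k = ∑ k ∈ range N, min (a k) (v k) := by
  rw [← sum_range_add_sum_Ico _ hi]
  congr 1
  · exact sum_congr rfl fun k hk => (min_eq_left (hlow k (mem_range.mp hk))).symm
  · refine sum_congr rfl fun k hk => ?_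
    obtain ⟨hik, hkN⟩ := mem_Ico.mp hk
    exact (min_eq_right (hhigh k hik hkN)).symm

lemma exists_threshold (N : ℕ) (hexch : ∀ k m, k < m → m < N → a m < v m → a k ≤ v k) :
    ∃ i ≤ N, (∀ k < i, a k ≤ v k) ∧ ∀ k, i ≤ k → k < N → v k ≤ a k := by
  induction N with
  | zero => exact ⟨0, le_rfl, by omega, by omega⟩
  | succ N ih =>
    obtain ⟨i, hiN, hlow, hhigh⟩ :=
      ih fun k m hkm hmN => hexch k m hkm (Nat.lt_succ_of_lt hmN)
    rcases le_or_gt (v N) (a N) with hN | hN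
    · refine ⟨i, hiN.trans N.le_succ, hlow, fun k hik hkN => ?_⟩
      rcases Nat.lt_succ_iff_lt_or_eq.mp hkN with hkN | rfl
      exacts [hhigh k hik hkN, hN]
    · refine ⟨N + 1, le_rfl, fun k hk => ?_, by omega⟩
      rcases Nat.lt_succ_iff_lt_or_eq.mp hk with hkN | rfl
      exacts [hexch k N hkN N.lt_succ_self hN, hN.le]

lemma inf'_sum_add_sum_eq_sum_min (N : ℕ)
    (hexch : ∀ k m, k < m → m < N → a m < v m → a k ≤ v k) :
    (range (N + 1)).inf' nonempty_range_add_one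
        (fun i => ∑ k ∈ range i, a k + ∑ k ∈ Ico i N, v k) =
      ∑ k ∈ range N, min (a k) (v k) := by
  refine le_antisymm ?_ (le_inf' _ _ fun i hi =>
    sum_min_le_sum_add_sum a v (Nat.lt_succ_iff.mp (mem_range.mp hi)))
  obtain ⟨i, hiN, hlow, hhigh⟩ := exists_threshold a v N hexch
  exact (inf'_le _ (mem_range.mpr (Nat.lt_succ_of_le hiN))).trans_eq
    (sum_add_sum_eq_sum_min a v hiN hlow hhigh)

end Threshold

theorem fLow_eq_FUpp_of_gms_general (n : ℕ) (v : ℕ → ℤ)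
    (hnonneg : ∀ i, i ≤ n → 0 ≤ v i)
    (hgms : ∀ i j : ℕ, i < j → j ≤ n → v i - v j ≥ (j : ℤ) - (i : ℤ) - 1) :
    ∀ t : ℤ, 0 ≤ t → fLow n v t = FUpp n v t := by
  intro t _
  set a : ℕ → ℤ := fun k => binom1 (t - k + 1)
  have hfLow : fLow n v t = ∑ k ∈ range (n + 1), min (a k) (v k) :=
    sum_congr rfl fun k hk =>
      binom1_min_of_nonneg (hnonneg k (Nat.lt_succ_iff.mp (mem_range.mp hk)))
  have hexch : ∀ k m, k < m → m < n + 1 → a m < v m → a k ≤ v k := by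
    intro k m hkm hmn ham
    have hkm' : (k : ℤ) < m := by exact_mod_cast hkm
    have ha : a k ≤ a m + (m - k) := by
      simpa using binom1_le_binom1_add_sub (show t - m + 1 ≤ t - k + 1 by omega)
    linarith [hgms k m hkm (Nat.lt_succ_iff.mp hmn)]
  rw [hfLow, ← inf'_sum_add_sum_eq_sum_min a v (n + 1) hexch, FUpp]
  simp only [binom2_sub_binom2_eq_sum, a]

theorem fLow_eq_FUpp_of_gms (n : ℕ) (v : ℕ → ℤ)
    (hnonneg : ∀ i, i ≤ n → 0 ≤ v i)
    (hnoninc : ∀ i, i + 1 ≤ n → v (i + 1) ≤ v i)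
    (hgms : ∀ i j : ℕ, i < j → j ≤ n → v i - v j ≥ (j : ℤ) - (i : ℤ) - 1) :
    ∀ t : ℤ, 0 ≤ t → fLow n v t = FUpp n v t :=
  fLow_eq_FUpp_of_gms_general n v hnonneg hgms
end

section
/- Let m_1 ≥ m_2 > 2 be integers and a_1, a_2 positive integers. Then the vector (a_1, a_2) * (m_1, m_2) is GMS. -/
/-!
Put `s = w_i - w_j`. The entries `w_i, …, w_j` are `j - i + 1` entries of `a ∘ m` lying in
`[w_j, w_i]`. Inside one block `(a m, (a - 1) m, …, m)` any two entries differ by at least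
`m ≥ 2`, so a block has `c` entries in that interval only if `2 (c - 1) ≤ s`. Adding the bounds
for the two blocks gives `2 (j - i - 1) ≤ 2 s`.
-/

/-- `a ∘ m`: concatenation over `i` of the sequences `(a_i m_i, (a_i-1) m_i, …, m_i)`. -/
def circOp (a m : List ℤ) : List ℤ :=
  (a.zip m).flatMap fun p => (List.range p.1.toNat).map fun k => (p.1 - k) * p.2

/-- `w` is `a * m`, i.e. the non-increasing rearrangement of `a ∘ m`. -/
def IsStar (a m w : List ℤ) : Prop :=
  (circOp a m).Perm w ∧ w.Chain' (· ≥ ·)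

/-- A list `w = (w_1, …, w_r)` is GMS: `w_i - w_j ≥ j - i - 1` for all `i < j`. -/
def IsGMSList (w : List ℤ) : Prop :=
  ∀ i j : ℕ, i < j → j < w.length → w.getD i 0 - w.getD j 0 ≥ (j : ℤ) - (i : ℤ) - 1

def circBlock (a m : ℤ) : List ℤ :=
  (List.range a.toNat).map fun k : ℕ => (a - k) * m

theorem circOp_cons (a m : ℤ) (as ms : List ℤ) :
    circOp (a :: as) (m :: ms) = circBlock a m ++ circOp as ms := by
  simp [circOp, circBlock, ← List.map_eq_flatMap]

theorem circOp_nil (ms : List ℤ) : circOp [] ms = [] := rfl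

theorem circBlock_pairwise (a : ℤ) {m : ℤ} (hm : 0 ≤ m) :
    (circBlock a m).Pairwise fun x y => y + m ≤ x := by
  refine List.pairwise_map.2 (List.pairwise_lt_range.imp fun {k l} hkl => ?_)
  have : (1 : ℤ) ≤ l - k := by omega
  nlinarith

section OrderedRing

variable {R : Type*} [CommRing R] [LinearOrder R] [IsStrictOrderedRing R]

theorem List.Pairwise.length_sub_one_mul_le {l : List R} {d lo hi : R}
    (hl : l.Pairwise fun x y => y + d ≤ x) (hmem : ∀ x ∈ l, x ∈ Set.Icc lo hi)
    (hlo : lo ≤ hi + d) : ((l.length : R) - 1) * d ≤ hi - lo := by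
  induction l generalizing hi with
  | nil => simpa using hlo
  | cons x t ih =>
    obtain ⟨hxt, ht⟩ := List.pairwise_cons.1 hl
    obtain ⟨hlox, hxhi⟩ := hmem x List.mem_cons_self
    have := ih ht (hi := x - d)
      (fun y hy => ⟨(hmem y (List.mem_cons_of_mem _ hy)).1, le_sub_iff_add_le.2 (hxt y hy)⟩)
      (by simpa using hlox)
    rw [List.length_cons, Nat.cast_succ]
    linarith

theorem List.Pairwise.countP_Icc_sub_one_mul_le {l : List R} {d : R}
    (hl : l.Pairwise fun x y => y + d ≤ x) {lo hi : R} (hlo : lo ≤ hi + d) :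
    ((l.countP (· ∈ Set.Icc lo hi) : R) - 1) * d ≤ hi - lo := by
  rw [List.countP_eq_length_filter]
  refine (hl.filter _).length_sub_one_mul_le (fun x hx => ?_) hlo
  simpa using (List.mem_filter.1 hx).2

end OrderedRing

theorem List.Pairwise.sub_add_one_le_countP_Icc {α : Type*} [Preorder α] [DecidableLE α]
    {w : List α} (hw : w.Pairwise (· ≥ ·)) {i j : ℕ} (hij : i ≤ j) (hj : j < w.length) :
    j - i + 1 ≤ w.countP (· ∈ Set.Icc w[j] w[i]) := by
  have hanti : ∀ p q (hp : p < w.length) (hq : q < w.length), p ≤ q → w[q] ≤ w[p] :=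
    fun p q hp hq hpq => hw.rel_get_of_le (a := ⟨p, hp⟩) (b := ⟨q, hq⟩) hpq
  set window := (w.drop i).take (j - i + 1)
  have hlen : window.length = j - i + 1 := by
    simp only [window, List.length_take, List.length_drop]
    omega
  have hmem : ∀ x ∈ window, x ∈ Set.Icc w[j] w[i] := by
    intro x hx
    obtain ⟨r, hr, rfl⟩ := List.mem_iff_getElem.1 hx
    simp only [window, List.getElem_take, List.getElem_drop]
    exact ⟨hanti _ _ _ _ (by omega), hanti _ _ _ _ (by omega)⟩
  calc j - i + 1 = window.countP (· ∈ Set.Icc w[j] w[i]) := by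
        rw [List.countP_eq_length.2 (by simpa using hmem), hlen]
    _ ≤ w.countP (· ∈ Set.Icc w[j] w[i]) :=
        ((List.take_sublist _ _).trans (List.drop_sublist _ _)).countP_le

theorem star_two_lines_gms_general (a₁ a₂ m₁ m₂ : ℤ)
    (hm : m₂ ≤ m₁) (hm₂ : 2 < m₂) :
    ∀ w : List ℤ, IsStar [a₁, a₂] [m₁, m₂] w → IsGMSList w := by
  rintro w ⟨hperm, hchain⟩ i j hij hj
  have hsorted : w.Pairwise (· ≥ ·) := List.isChain_iff_pairwise.1 hchain
  have hwindow := hsorted.sub_add_one_le_countP_Icc hij.le hj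
  have hlohi : w[j] ≤ w[i] :=
    hsorted.rel_get_of_le (a := ⟨i, by omega⟩) (b := ⟨j, hj⟩) hij.le
  have hblock (a m : ℤ) (h2m : 2 ≤ m) :
      (((circBlock a m).countP (· ∈ Set.Icc w[j] w[i]) : ℤ) - 1) * 2 ≤ w[i] - w[j] :=
    ((circBlock_pairwise a (by omega)).imp fun h => by omega).countP_Icc_sub_one_mul_le
      (by omega)
  rw [← hperm.countP_eq, circOp_cons, circOp_cons, circOp_nil, List.countP_append,
    List.countP_append, List.countP_nil] at hwindow
  have h₁ := hblock a₁ m₁ (by omega)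
  have h₂ := hblock a₂ m₂ (by omega)
  rw [List.getD_eq_getElem w 0 (by omega), List.getD_eq_getElem w 0 hj]
  omega

theorem star_two_lines_gms (a₁ a₂ m₁ m₂ : ℤ)
    (ha₁ : 0 < a₁) (ha₂ : 0 < a₂) (hm : m₂ ≤ m₁) (hm₂ : 2 < m₂) :
    ∀ w : List ℤ, IsStar [a₁, a₂] [m₁, m₂] w → IsGMSList w :=
  star_two_lines_gms_general a₁ a₂ m₁ m₂ hm hm₂
end
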